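/- arXiv:1512.08462 — 9 statements merged into one kernel-verified Lean document; each statement's English description precedes it below -/
import Mathlib

section
/- Error equality (Case I, trivial coefficients): let (x, y) ∈ D(A) × D(A*) satisfy A*y + x = f and Ax = y. Then for any (x̃, ỹ) ∈ D(A) × D(A*): ‖x − x̃‖² + ‖A(x − x̃)‖² + ‖y − ỹ‖² + ‖A*(y − ỹ)‖² = ‖f − x̃ − A*ỹ‖² + ‖ỹ − A x̃‖². -/
open scoped ComplexInnerProductSpace

/-- Error equality (Case I, trivial coefficients). -/
theorem stmt_2
    {H1 H2 : Type*} [NormedAddCommGroup H1] [InnerProductSpace ℂ H1] [CompleteSpace H1]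
    [NormedAddCommGroup H2] [InnerProductSpace ℂ H2] [CompleteSpace H2]
    (A : H1 →ₗ.[ℂ] H2) (hd : Dense (A.domain : Set H1)) (hc : A.IsClosed)
    (f : H1) (x xt : A.domain) (y yt : A.adjoint.domain)
    (h1 : A.adjoint y + (x : H1) = f) (h2 : A x = (y : H2)) :
    ‖(x : H1) - (xt : H1)‖ ^ 2 + ‖A (x - xt)‖ ^ 2
      + ‖(y : H2) - (yt : H2)‖ ^ 2 + ‖A.adjoint (y - yt)‖ ^ 2
      = ‖f - (xt : H1) - A.adjoint yt‖ ^ 2 + ‖(yt : H2) - A xt‖ ^ 2 := by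
  set e : A.domain := x - xt with he
  set ε : A.adjoint.domain := y - yt with hε
  have hA : f - (xt : H1) - A.adjoint yt = (A.adjoint ε : H1) + (e : H1) := by
    simp only [hε, he, LinearPMap.map_sub, AddSubgroupClass.coe_sub]
    rw [← h1]; abel
  have hB : (yt : H2) - A xt = A e - (ε : H2) := by
    simp only [hε, he, LinearPMap.map_sub, AddSubgroupClass.coe_sub]
    rw [h2]; abel
  have hE : (x : H1) - (xt : H1) = (e : H1) := by simp [he]
  have hY : (y : H2) - (yt : H2) = (ε : H2) := by simp [hε]
  have hcross : (⟪(A.adjoint ε : H1), (e : H1)⟫).re = (⟪(A e : H2), (ε : H2)⟫).re := by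
    rw [A.adjoint_isFormalAdjoint hd ε e]
    exact inner_re_symm (𝕜 := ℂ) _ _
  rw [hA, hB, hE, hY, norm_add_sq (𝕜 := ℂ), norm_sub_sq (𝕜 := ℂ)]
  simp only [RCLike.re_to_complex] at hcross ⊢
  rw [hcross]
  ring
end

section
/- Error equality with coefficients: let α1 : H1 → H1 and α2 : H2 → H2 be bounded self-adjoint positive topological isomorphisms, and let (x, y) ∈ D(A) × D(A*) satisfy A*y + α1 x = f and α2 A x = y. Then for any (x̃, ỹ) ∈ D(A) × D(A*): ‖x − x̃‖²_{α1} + ‖A(x − x̃)‖²_{α2} + ‖y − ỹ‖²_{α2⁻¹} + ‖A*(y − ỹ)‖²_{α1⁻¹} = ‖f − α1 x̃ − A*ỹ‖²_{α1⁻¹} + ‖ỹ − α2 A x̃‖²_{α2⁻¹}, where ‖z‖²_β := ⟨βz, z⟩. -/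
open scoped ComplexInnerProductSpace

private lemma key_expand {H : Type*} [NormedAddCommGroup H] [InnerProductSpace ℂ H] [CompleteSpace H]
    (α : H ≃L[ℂ] H) (hα : (α : H →L[ℂ] H).IsPositive) (u v : H) :
    (⟪α.symm ((α u) + v), (α u) + v⟫).re
      = (⟪α u, u⟫).re + (⟪α.symm v, v⟫).re + 2 * (⟪u, v⟫).re := by
  have hsym := hα.isSelfAdjoint.isSymmetric
  have h1 : α.symm ((α u) + v) = u + α.symm v := by
    rw [map_add, α.symm_apply_apply]
  rw [h1]
  simp only [inner_add_left, inner_add_right]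
  have h2 : ⟪α.symm v, α u⟫ = ⟪v, u⟫ := by
    have := hsym (α.symm v) u
    simpa [α.apply_symm_apply] using this.symm
  have h4 : (⟪v, u⟫).re = (⟪u, v⟫).re := by rw [← inner_conj_symm, Complex.conj_re]
  simp only [Complex.add_re, h2]
  have h5 : (⟪u, (α : H ≃L[ℂ] H) u⟫).re = (⟪α u, u⟫).re := by
    rw [← inner_conj_symm, Complex.conj_re]
  rw [h5, h4]
  ring

/-- Error equality with coefficients α1, α2 (bounded self-adjoint positive
topological isomorphisms), weighted norms ‖z‖²_β = Re⟪βz, z⟫. -/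
theorem stmt_3
    {H1 H2 : Type*} [NormedAddCommGroup H1] [InnerProductSpace ℂ H1] [CompleteSpace H1]
    [NormedAddCommGroup H2] [InnerProductSpace ℂ H2] [CompleteSpace H2]
    (A : H1 →ₗ.[ℂ] H2) (hd : Dense (A.domain : Set H1)) (hc : A.IsClosed)
    (α1 : H1 ≃L[ℂ] H1) (α2 : H2 ≃L[ℂ] H2)
    (hα1 : (α1 : H1 →L[ℂ] H1).IsPositive) (hα2 : (α2 : H2 →L[ℂ] H2).IsPositive)
    (f : H1) (x xt : A.domain) (y yt : A.adjoint.domain)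
    (h1 : A.adjoint y + α1 (x : H1) = f) (h2 : α2 (A x) = (y : H2)) :
    (⟪α1 ((x : H1) - (xt : H1)), (x : H1) - (xt : H1)⟫).re
      + (⟪α2 (A (x - xt)), A (x - xt)⟫).re
      + (⟪α2.symm ((y : H2) - (yt : H2)), (y : H2) - (yt : H2)⟫).re
      + (⟪α1.symm (A.adjoint (y - yt)), A.adjoint (y - yt)⟫).re
    = (⟪α1.symm (f - α1 (xt : H1) - A.adjoint yt), f - α1 (xt : H1) - A.adjoint yt⟫).re
      + (⟪α2.symm ((yt : H2) - α2 (A xt)), (yt : H2) - α2 (A xt)⟫).re := by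
  set e : H1 := (x : H1) - (xt : H1) with he
  set a : H2 := A (x - xt) with ha
  set r : H2 := (y : H2) - (yt : H2) with hr
  set b : H1 := A.adjoint (y - yt) with hb
  have E1 : f - α1 (xt : H1) - A.adjoint yt = α1 e + b := by
    rw [hb, LinearPMap.map_sub, ← h1, he, map_sub]
    push_cast
    abel
  have E2 : (yt : H2) - α2 (A xt) = α2 a + (-r) := by
    rw [ha, LinearPMap.map_sub, map_sub, h2, hr]
    abel
  have K1 := key_expand α1 hα1 e b
  have K2 := key_expand α2 hα2 a (-r)
  have cross : (⟪e, b⟫).re = (⟪a, r⟫).re := by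
    have := A.adjoint_isFormalAdjoint hd (y - yt) (x - xt)
    have hco : ((y - yt : A.adjoint.domain) : H2) = r := by push_cast [hr]; ring
    have hco2 : ((x - xt : A.domain) : H1) = e := by push_cast [he]; ring
    rw [hco, hco2] at this
    -- this : ⟪b, e⟫ = ⟪r, a⟫
    have h5 : (⟪e, b⟫).re = (⟪b, e⟫).re := by rw [← inner_conj_symm, Complex.conj_re]
    have h6 : (⟪r, a⟫).re = (⟪a, r⟫).re := by rw [← inner_conj_symm, Complex.conj_re]
    rw [h5, this, h6]
  rw [E1, E2, K1, K2]
  have hnr : (⟪α2.symm (-r), -r⟫).re = (⟪α2.symm r, r⟫).re := by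
    rw [map_neg, inner_neg_neg]
  have hanr : (⟪a, -r⟫).re = -(⟪a, r⟫).re := by rw [inner_neg_right, Complex.neg_re]
  rw [hnr, hanr, cross]
  ring
end

section
/- Minimization property of the majorant over the dual variable: with the setting of the error equality, for any x̃ ∈ D(A), ‖x − x̃‖² + ‖A(x − x̃)‖² = min over ψ ∈ D(A*) of M(x̃, ψ), where M(x̃, ψ) = ‖f − x̃ − A*ψ‖² + ‖ψ − A x̃‖², and the minimum is attained at ψ = y. -/
open scoped ComplexInnerProductSpace

/-!
Put `e = x - x̃` and `u = y - ψ`. The equations for `(x, y)` turn the two residuals of the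
majorant into `A* u + e` and `A e - u`; expanding the squares, the cross terms `re ⟪A* u, e⟫` and
`re ⟪A e, u⟫` cancel because `A*` is the adjoint of `A`. Hence the majorant is the error
`‖e‖² + ‖A e‖²` plus the nonnegative term `‖A* u‖² + ‖u‖²`, which vanishes at `ψ = y`.
-/

theorem norm_add_sq_add_norm_sub_sq_of_re_inner_eq {𝕜 E F : Type*} [RCLike 𝕜]
    [NormedAddCommGroup E] [InnerProductSpace 𝕜 E] [NormedAddCommGroup F] [InnerProductSpace 𝕜 F]
    {a e : E} {b u : F} (h : RCLike.re (inner 𝕜 a e) = RCLike.re (inner 𝕜 b u)) :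
    ‖a + e‖ ^ 2 + ‖b - u‖ ^ 2 = ‖e‖ ^ 2 + ‖b‖ ^ 2 + (‖a‖ ^ 2 + ‖u‖ ^ 2) := by
  rw [@norm_add_sq 𝕜, @norm_sub_sq 𝕜, h]
  ring

namespace LinearPMap

variable {𝕜 E F : Type*} [RCLike 𝕜]
  [NormedAddCommGroup E] [InnerProductSpace 𝕜 E] [CompleteSpace E]
  [NormedAddCommGroup F] [InnerProductSpace 𝕜 F]
  {A : E →ₗ.[𝕜] F}

theorem norm_adjoint_add_sq_add_norm_sub_sq (hd : Dense (A.domain : Set E))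
    (u : A.adjoint.domain) (e : A.domain) :
    ‖A.adjoint u + e‖ ^ 2 + ‖A e - u‖ ^ 2
      = ‖(e : E)‖ ^ 2 + ‖A e‖ ^ 2 + (‖A.adjoint u‖ ^ 2 + ‖(u : F)‖ ^ 2) := by
  refine norm_add_sq_add_norm_sub_sq_of_re_inner_eq (𝕜 := 𝕜) ?_
  rw [adjoint_isFormalAdjoint hd u e, ← inner_conj_symm, RCLike.conj_re]

theorem majorant_eq_error_add (hd : Dense (A.domain : Set E))
    {f : E} {x : A.domain} {y : A.adjoint.domain}
    (h1 : A.adjoint y + (x : E) = f) (h2 : A x = (y : F))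
    (xt : A.domain) (ψ : A.adjoint.domain) :
    ‖f - (xt : E) - A.adjoint ψ‖ ^ 2 + ‖(ψ : F) - A xt‖ ^ 2
      = ‖(x : E) - (xt : E)‖ ^ 2 + ‖A (x - xt)‖ ^ 2
        + (‖A.adjoint (y - ψ)‖ ^ 2 + ‖((y - ψ : A.adjoint.domain) : F)‖ ^ 2) := by
  have hres₁ : f - (xt : E) - A.adjoint ψ = A.adjoint (y - ψ) + ((x - xt : A.domain) : E) := by
    rw [A.adjoint.map_sub, ← h1, Submodule.coe_sub]
    abel
  have hres₂ : (ψ : F) - A xt = A (x - xt) - ((y - ψ : A.adjoint.domain) : F) := by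
    rw [A.map_sub, h2, Submodule.coe_sub]
    abel
  rw [hres₁, hres₂, norm_adjoint_add_sq_add_norm_sub_sq hd, Submodule.coe_sub]

end LinearPMap

theorem stmt_4_general
    {H1 H2 : Type*} [NormedAddCommGroup H1] [InnerProductSpace ℂ H1] [CompleteSpace H1]
    [NormedAddCommGroup H2] [InnerProductSpace ℂ H2]
    (A : H1 →ₗ.[ℂ] H2) (hd : Dense (A.domain : Set H1))
    (f : H1) (x : A.domain) (y : A.adjoint.domain)
    (h1 : A.adjoint y + (x : H1) = f) (h2 : A x = (y : H2))
    (xt : A.domain) :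
    (∀ ψ : A.adjoint.domain,
      ‖(x : H1) - (xt : H1)‖ ^ 2 + ‖A (x - xt)‖ ^ 2
        ≤ ‖f - (xt : H1) - A.adjoint ψ‖ ^ 2 + ‖(ψ : H2) - A xt‖ ^ 2) ∧
    ‖(x : H1) - (xt : H1)‖ ^ 2 + ‖A (x - xt)‖ ^ 2
      = ‖f - (xt : H1) - A.adjoint y‖ ^ 2 + ‖(y : H2) - A xt‖ ^ 2 := by
  refine ⟨fun ψ => ?_, ?_⟩
  · rw [LinearPMap.majorant_eq_error_add hd h1 h2 xt ψ]
    exact le_add_of_nonneg_right (by positivity)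
  · simp [LinearPMap.majorant_eq_error_add hd h1 h2 xt y]

/-- Minimization property of the majorant over the dual variable:
the primal error equals the minimum of the majorant over ψ ∈ D(A*),
attained at ψ = y. -/
theorem stmt_4
    {H1 H2 : Type*} [NormedAddCommGroup H1] [InnerProductSpace ℂ H1] [CompleteSpace H1]
    [NormedAddCommGroup H2] [InnerProductSpace ℂ H2] [CompleteSpace H2]
    (A : H1 →ₗ.[ℂ] H2) (hd : Dense (A.domain : Set H1)) (hc : A.IsClosed)
    (f : H1) (x : A.domain) (y : A.adjoint.domain)
    (h1 : A.adjoint y + (x : H1) = f) (h2 : A x = (y : H2))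
    (xt : A.domain) :
    (∀ ψ : A.adjoint.domain,
      ‖(x : H1) - (xt : H1)‖ ^ 2 + ‖A (x - xt)‖ ^ 2
        ≤ ‖f - (xt : H1) - A.adjoint ψ‖ ^ 2 + ‖(ψ : H2) - A xt‖ ^ 2) ∧
    ‖(x : H1) - (xt : H1)‖ ^ 2 + ‖A (x - xt)‖ ^ 2
      = ‖f - (xt : H1) - A.adjoint y‖ ^ 2 + ‖(y : H2) - A xt‖ ^ 2 :=
  stmt_4_general A hd f x y h1 h2 xt
end

section
/- Minimization property of the majorant over the primal variable: with the setting of the error equality, for any ỹ ∈ D(A*), ‖y − ỹ‖² + ‖A*(y − ỹ)‖² = min over φ ∈ D(A) of M(φ, ỹ), where M(φ, ỹ) = ‖f − φ − A*ỹ‖² + ‖ỹ − Aφ‖², and the minimum is attained at φ = x. -/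
/-!
Write `e = y - ỹ` and `u = x - φ`. The two residuals of the majorant are `f - φ - A*ỹ = A*e + u`
and `ỹ - Aφ = Au - e`; expanding their squared norms, the cross terms `2 Re ⟪A*e, u⟫` and
`2 Re ⟪Au, e⟫` cancel by the adjoint relation. Hence the majorant is the dual error
`‖e‖² + ‖A*e‖²` plus the nonnegative term `‖u‖² + ‖Au‖²`, which vanishes exactly at `φ = x`.
-/

namespace LinearPMap.IsFormalAdjoint

variable {𝕜 E F : Type*} [RCLike 𝕜] [NormedAddCommGroup E] [InnerProductSpace 𝕜 E]
  [NormedAddCommGroup F] [InnerProductSpace 𝕜 F] {S : F →ₗ.[𝕜] E} {T : E →ₗ.[𝕜] F}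

theorem norm_add_sq_add_norm_sub_sq (hST : S.IsFormalAdjoint T) (e : S.domain)
    (u : T.domain) :
    ‖S e + (u : E)‖ ^ 2 + ‖T u - (e : F)‖ ^ 2
      = (‖(e : F)‖ ^ 2 + ‖S e‖ ^ 2) + (‖(u : E)‖ ^ 2 + ‖T u‖ ^ 2) := by
  have cross : RCLike.re (inner 𝕜 (S e) (u : E)) = RCLike.re (inner 𝕜 (T u) (e : F)) := by
    rw [hST.symm u e, inner_re_symm]
  rw [norm_add_sq (𝕜 := 𝕜), norm_sub_sq (𝕜 := 𝕜), cross]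
  ring

theorem majorant_eq (hST : S.IsFormalAdjoint T) {f : E} {x : T.domain} {y : S.domain}
    (h1 : S y + (x : E) = f) (h2 : T x = (y : F)) (yt : S.domain) (φ : T.domain) :
    ‖f - (φ : E) - S yt‖ ^ 2 + ‖(yt : F) - T φ‖ ^ 2
      = (‖(y : F) - (yt : F)‖ ^ 2 + ‖S (y - yt)‖ ^ 2)
        + (‖(x : E) - (φ : E)‖ ^ 2 + ‖T (x - φ)‖ ^ 2) := by
  have primal : f - (φ : E) - S yt = S (y - yt) + ((x - φ : T.domain) : E) := by
    rw [S.map_sub, ← h1, Submodule.coe_sub]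
    abel
  have dual : (yt : F) - T φ = T (x - φ) - ((y - yt : S.domain) : F) := by
    rw [T.map_sub, h2, Submodule.coe_sub]
    abel
  rw [primal, dual, hST.norm_add_sq_add_norm_sub_sq, Submodule.coe_sub, Submodule.coe_sub]

end LinearPMap.IsFormalAdjoint

theorem stmt_5_general
    {H1 H2 : Type*} [NormedAddCommGroup H1] [InnerProductSpace ℂ H1] [CompleteSpace H1]
    [NormedAddCommGroup H2] [InnerProductSpace ℂ H2]
    (A : H1 →ₗ.[ℂ] H2) (hd : Dense (A.domain : Set H1))
    (f : H1) (x : A.domain) (y : A.adjoint.domain)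
    (h1 : A.adjoint y + (x : H1) = f) (h2 : A x = (y : H2))
    (yt : A.adjoint.domain) :
    (∀ φ : A.domain,
      ‖(y : H2) - (yt : H2)‖ ^ 2 + ‖A.adjoint (y - yt)‖ ^ 2
        ≤ ‖f - (φ : H1) - A.adjoint yt‖ ^ 2 + ‖(yt : H2) - A φ‖ ^ 2) ∧
    ‖(y : H2) - (yt : H2)‖ ^ 2 + ‖A.adjoint (y - yt)‖ ^ 2
      = ‖f - (x : H1) - A.adjoint yt‖ ^ 2 + ‖(yt : H2) - A x‖ ^ 2 := by
  have majorant := (A.adjoint_isFormalAdjoint hd).majorant_eq h1 h2 yt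
  refine ⟨fun φ => ?_, ?_⟩
  · rw [majorant φ]
    exact le_add_of_nonneg_right (by positivity)
  · simp [majorant x]

/-- Minimization property of the majorant over the primal variable:
the dual error equals the minimum of the majorant over φ ∈ D(A),
attained at φ = x. -/
theorem stmt_5
    {H1 H2 : Type*} [NormedAddCommGroup H1] [InnerProductSpace ℂ H1] [CompleteSpace H1]
    [NormedAddCommGroup H2] [InnerProductSpace ℂ H2] [CompleteSpace H2]
    (A : H1 →ₗ.[ℂ] H2) (hd : Dense (A.domain : Set H1)) (hc : A.IsClosed)
    (f : H1) (x : A.domain) (y : A.adjoint.domain)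
    (h1 : A.adjoint y + (x : H1) = f) (h2 : A x = (y : H2))
    (yt : A.adjoint.domain) :
    (∀ φ : A.domain,
      ‖(y : H2) - (yt : H2)‖ ^ 2 + ‖A.adjoint (y - yt)‖ ^ 2
        ≤ ‖f - (φ : H1) - A.adjoint yt‖ ^ 2 + ‖(yt : H2) - A φ‖ ^ 2) ∧
    ‖(y : H2) - (yt : H2)‖ ^ 2 + ‖A.adjoint (y - yt)‖ ^ 2
      = ‖f - (x : H1) - A.adjoint yt‖ ^ 2 + ‖(yt : H2) - A x‖ ^ 2 :=
  stmt_5_general A hd f x y h1 h2 yt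
end

section
/- Almost-isometry for Case II: if x ∈ D(A), y = Ax ∈ D(A*), and A*y + i x = f, then ‖f‖² ≤ ‖x‖² + ‖Ax‖² + ‖y‖² + ‖A*y‖² ≤ 2‖f‖². -/
open scoped ComplexInnerProductSpace

/-- Almost-isometry for Case II:
if `A*y + i·x = f` with `y = Ax ∈ D(A*)`, then
`‖f‖² ≤ ‖x‖² + ‖Ax‖² + ‖y‖² + ‖A*y‖² ≤ 2‖f‖²`. -/
theorem stmt_8
    {H1 H2 : Type*} [NormedAddCommGroup H1] [InnerProductSpace ℂ H1] [CompleteSpace H1]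
    [NormedAddCommGroup H2] [InnerProductSpace ℂ H2] [CompleteSpace H2]
    (A : H1 →ₗ.[ℂ] H2) (hd : Dense (A.domain : Set H1)) (hc : A.IsClosed)
    (f : H1) (x : A.domain) (hy : A x ∈ A.adjoint.domain)
    (heq : A.adjoint ⟨A x, hy⟩ + Complex.I • (x : H1) = f) :
    ‖f‖ ^ 2 ≤ ‖(x : H1)‖ ^ 2 + ‖A x‖ ^ 2 + ‖A x‖ ^ 2 + ‖A.adjoint ⟨A x, hy⟩‖ ^ 2 ∧
    ‖(x : H1)‖ ^ 2 + ‖A x‖ ^ 2 + ‖A x‖ ^ 2 + ‖A.adjoint ⟨A x, hy⟩‖ ^ 2 ≤ 2 * ‖f‖ ^ 2 := by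
  set g := A.adjoint ⟨A x, hy⟩ with hg
  have hadj : ⟪g, (x : H1)⟫ = ⟪(A x : H2), A x⟫ :=
    A.adjoint_isFormalAdjoint hd ⟨A x, hy⟩ x
  have hAx : ⟪g, (x : H1)⟫ = ((‖A x‖ ^ 2 : ℝ) : ℂ) := by
    rw [hadj, inner_self_eq_norm_sq_to_K]
    norm_cast
  have hcross : RCLike.re ⟪g, Complex.I • (x : H1)⟫ = 0 := by
    rw [inner_smul_right, hAx]
    simp [RCLike.ofReal_alg]
    norm_cast
  have hnormf : ‖f‖ ^ 2 = ‖g‖ ^ 2 + ‖(x : H1)‖ ^ 2 := by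
    rw [← heq, @norm_add_sq ℂ, hcross, norm_smul]
    simp
  have hre : RCLike.re ⟪g, (x : H1)⟫ = ‖A x‖ ^ 2 := by
    rw [hAx]; exact RCLike.ofReal_re _
  have hle : ‖A x‖ ^ 2 ≤ ‖g‖ * ‖(x : H1)‖ := by
    rw [← hre]; exact re_inner_le_norm g _
  constructor
  · nlinarith [sq_nonneg ‖A x‖]
  · nlinarith [two_mul_le_add_sq ‖g‖ ‖(x : H1)‖]
end

section
/- Two-sided error estimate (Case II): let (x, y) ∈ D(A) × D(A*) satisfy A*y + i x = f and Ax = y. Then for any (x̃, ỹ) ∈ D(A) × D(A*): (√2/(√2+1))·M ≤ ‖x−x̃‖² + ‖A(x−x̃)‖² + ‖y−ỹ‖² + ‖A*(y−ỹ)‖² ≤ (√2/(√2−1))·M, where M = ‖f − i x̃ − A*ỹ‖² + ‖ỹ − A x̃‖². -/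
/-!
Write `e = x - x̃`, `d = y - ỹ` and `c = ⟪A e, d⟫ = ⟪e, A* d⟫`. Since `(x, y)` solves the system,
the two residuals are `A* d + i e` and `A e - d`, so expanding the squares gives
`M = E + 2 (Im c - Re c)` with `E` the graph-norm error. By Cauchy–Schwarz and AM–GM,
`4 |c| ≤ E`, and `|Im c - Re c| ≤ √2 |c|`; hence `|M - E| ≤ E / √2`, which is the two-sided estimate.
-/

open scoped ComplexInnerProductSpace

theorem Complex.abs_im_sub_re_le_sqrt_two_mul_norm (z : ℂ) : |z.im - z.re| ≤ √2 * ‖z‖ := by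
  have hsq : (z.im - z.re) ^ 2 ≤ (√2 * ‖z‖) ^ 2 := by
    rw [mul_pow, Real.sq_sqrt zero_le_two, Complex.sq_norm, Complex.normSq_apply]
    nlinarith [sq_nonneg (z.im + z.re)]
  exact abs_le_of_sq_le_sq hsq (by positivity)

theorem two_sided_bound_of_abs_sub_le_div_sqrt_two {E M : ℝ} (h : |M - E| ≤ E / √2) :
    √2 / (√2 + 1) * M ≤ E ∧ E ≤ √2 / (√2 - 1) * M := by
  have hs : 1 < √2 := by rw [Real.lt_sqrt zero_le_one]; norm_num
  have hsE : √2 * (E / √2) = E := mul_div_cancel₀ E (by positivity)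
  obtain ⟨hlo, hhi⟩ := abs_le.mp h
  constructor
  · rw [div_mul_eq_mul_div, div_le_iff₀ (by positivity)]
    nlinarith
  · rw [div_mul_eq_mul_div, le_div_iff₀ (by linarith)]
    nlinarith

namespace LinearPMap

variable {E F : Type*} [NormedAddCommGroup E] [InnerProductSpace ℂ E]
  [NormedAddCommGroup F] [InnerProductSpace ℂ F]
  {T : E →ₗ.[ℂ] F} {S : F →ₗ.[ℂ] E}

theorem IsFormalAdjoint.norm_residual_sq_eq (h : T.IsFormalAdjoint S) (e : T.domain)
    (d : S.domain) :
    ‖S d + Complex.I • (e : E)‖ ^ 2 + ‖T e - d‖ ^ 2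
      = ‖(e : E)‖ ^ 2 + ‖T e‖ ^ 2 + ‖(d : F)‖ ^ 2 + ‖S d‖ ^ 2
        + 2 * ((⟪T e, d⟫).im - (⟪T e, d⟫).re) := by
  have hcross : ⟪S d, Complex.I • (e : E)⟫ = Complex.I * starRingEnd ℂ ⟪T e, d⟫ := by
    rw [inner_smul_right, h, inner_conj_symm]
  rw [@norm_add_sq ℂ, @norm_sub_sq ℂ, hcross, norm_smul, Complex.norm_I, one_mul]
  simp only [RCLike.re_to_complex, Complex.mul_re, Complex.I_re, Complex.I_im,
    Complex.conj_re, Complex.conj_im]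
  ring

theorem IsFormalAdjoint.four_mul_norm_inner_le (h : T.IsFormalAdjoint S) (e : T.domain)
    (d : S.domain) :
    4 * ‖⟪T e, d⟫‖ ≤ ‖(e : E)‖ ^ 2 + ‖T e‖ ^ 2 + ‖(d : F)‖ ^ 2 + ‖S d‖ ^ 2 := by
  have h₁ : ‖⟪T e, d⟫‖ ≤ ‖T e‖ * ‖(d : F)‖ := norm_inner_le_norm _ _
  have h₂ : ‖⟪T e, d⟫‖ ≤ ‖(e : E)‖ * ‖S d‖ := h e d ▸ norm_inner_le_norm _ _
  nlinarith [sq_nonneg (‖T e‖ - ‖(d : F)‖), sq_nonneg (‖(e : E)‖ - ‖S d‖)]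

theorem IsFormalAdjoint.abs_norm_residual_sq_sub_le (h : T.IsFormalAdjoint S) (e : T.domain)
    (d : S.domain) :
    |‖S d + Complex.I • (e : E)‖ ^ 2 + ‖T e - d‖ ^ 2
        - (‖(e : E)‖ ^ 2 + ‖T e‖ ^ 2 + ‖(d : F)‖ ^ 2 + ‖S d‖ ^ 2)|
      ≤ (‖(e : E)‖ ^ 2 + ‖T e‖ ^ 2 + ‖(d : F)‖ ^ 2 + ‖S d‖ ^ 2) / √2 := by
  rw [h.norm_residual_sq_eq, add_sub_cancel_left, abs_mul, abs_two,
    le_div_iff₀ (by positivity)]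
  calc 2 * |(⟪T e, d⟫).im - (⟪T e, d⟫).re| * √2
      ≤ 2 * (√2 * ‖⟪T e, d⟫‖) * √2 := by
        gcongr; exact Complex.abs_im_sub_re_le_sqrt_two_mul_norm _
    _ = 4 * ‖⟪T e, d⟫‖ := by
        linear_combination 2 * ‖⟪T e, d⟫‖ * Real.mul_self_sqrt zero_le_two
    _ ≤ _ := h.four_mul_norm_inner_le e d

end LinearPMap

theorem stmt_10_general
    {H1 H2 : Type*} [NormedAddCommGroup H1] [InnerProductSpace ℂ H1] [CompleteSpace H1]
    [NormedAddCommGroup H2] [InnerProductSpace ℂ H2]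
    (A : H1 →ₗ.[ℂ] H2) (hd : Dense (A.domain : Set H1))
    (f : H1) (x xt : A.domain) (y yt : A.adjoint.domain)
    (h1 : A.adjoint y + Complex.I • (x : H1) = f) (h2 : A x = (y : H2)) :
    Real.sqrt 2 / (Real.sqrt 2 + 1) *
        (‖f - Complex.I • (xt : H1) - A.adjoint yt‖ ^ 2 + ‖(yt : H2) - A xt‖ ^ 2)
      ≤ ‖(x : H1) - (xt : H1)‖ ^ 2 + ‖A (x - xt)‖ ^ 2
        + ‖(y : H2) - (yt : H2)‖ ^ 2 + ‖A.adjoint (y - yt)‖ ^ 2 ∧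
    ‖(x : H1) - (xt : H1)‖ ^ 2 + ‖A (x - xt)‖ ^ 2
        + ‖(y : H2) - (yt : H2)‖ ^ 2 + ‖A.adjoint (y - yt)‖ ^ 2
      ≤ Real.sqrt 2 / (Real.sqrt 2 - 1) *
        (‖f - Complex.I • (xt : H1) - A.adjoint yt‖ ^ 2 + ‖(yt : H2) - A xt‖ ^ 2) := by
  have hres₁ : f - Complex.I • (xt : H1) - A.adjoint yt
      = A.adjoint (y - yt) + Complex.I • ((x - xt : A.domain) : H1) := by
    rw [← h1, A.adjoint.map_sub, Submodule.coe_sub, smul_sub]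
    abel
  have hres₂ : (yt : H2) - A xt = A (x - xt) - ((y - yt : A.adjoint.domain) : H2) := by
    rw [A.map_sub, h2, Submodule.coe_sub]
    abel
  rw [hres₁, hres₂]
  exact two_sided_bound_of_abs_sub_le_div_sqrt_two
    ((A.adjoint_isFormalAdjoint hd).symm.abs_norm_residual_sq_sub_le (x - xt) (y - yt))

/-- Two-sided error estimate (Case II). -/
theorem stmt_10
    {H1 H2 : Type*} [NormedAddCommGroup H1] [InnerProductSpace ℂ H1] [CompleteSpace H1]
    [NormedAddCommGroup H2] [InnerProductSpace ℂ H2] [CompleteSpace H2]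
    (A : H1 →ₗ.[ℂ] H2) (hd : Dense (A.domain : Set H1)) (hc : A.IsClosed)
    (f : H1) (x xt : A.domain) (y yt : A.adjoint.domain)
    (h1 : A.adjoint y + Complex.I • (x : H1) = f) (h2 : A x = (y : H2)) :
    Real.sqrt 2 / (Real.sqrt 2 + 1) *
        (‖f - Complex.I • (xt : H1) - A.adjoint yt‖ ^ 2 + ‖(yt : H2) - A xt‖ ^ 2)
      ≤ ‖(x : H1) - (xt : H1)‖ ^ 2 + ‖A (x - xt)‖ ^ 2
        + ‖(y : H2) - (yt : H2)‖ ^ 2 + ‖A.adjoint (y - yt)‖ ^ 2 ∧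
    ‖(x : H1) - (xt : H1)‖ ^ 2 + ‖A (x - xt)‖ ^ 2
        + ‖(y : H2) - (yt : H2)‖ ^ 2 + ‖A.adjoint (y - yt)‖ ^ 2
      ≤ Real.sqrt 2 / (Real.sqrt 2 - 1) *
        (‖f - Complex.I • (xt : H1) - A.adjoint yt‖ ^ 2 + ‖(yt : H2) - A xt‖ ^ 2) :=
  stmt_10_general A hd f x xt y yt h1 h2
end

section
/- Parametrized two-sided bounds: in the Case II setting, for every δ > 0, (1 − √2/(2δ))(‖x−x̃‖² + ‖A(x−x̃)‖²) + (1 − √2·δ/2)(‖y−ỹ‖² + ‖A*(y−ỹ)‖²) ≤ M ≤ (1 + √2/(2δ))(‖x−x̃‖² + ‖A(x−x̃)‖²) + (1 + √2·δ/2)(‖y−ỹ‖² + ‖A*(y−ỹ)‖²), where M = ‖f − i x̃ − A*ỹ‖² + ‖ỹ − A x̃‖². -/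
/-!
With `u = x - x̃` and `v = y - ỹ` the two residuals are `A*v + i u` and `A u - v`, so expanding
the squares gives `M = ‖u‖² + ‖A u‖² + ‖v‖² + ‖A*v‖² - 2 (Re z + Im z)` with `z = ⟪v, A u⟫ = ⟪A*v, u⟫`.
The cross term is controlled by `|Re z + Im z| ≤ √2 |z|` and, using both expressions of `z`,
`4 δ |z| ≤ 2 δ (‖v‖ ‖A u‖ + ‖A*v‖ ‖u‖) ≤ ‖u‖² + ‖A u‖² + δ² (‖v‖² + ‖A*v‖²)`.
-/

open scoped ComplexInnerProductSpace

theorem Complex.abs_re_add_im_le (z : ℂ) : |z.re + z.im| ≤ √2 * ‖z‖ := by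
  have h : (z.re + z.im) ^ 2 ≤ 2 * ‖z‖ ^ 2 := by
    rw [Complex.sq_norm, Complex.normSq_apply]
    nlinarith [sq_nonneg (z.re - z.im)]
  simpa [Real.sqrt_mul zero_le_two, Real.sqrt_sq (norm_nonneg z)] using Real.abs_le_sqrt h

theorem four_mul_le_of_le_mul_of_le_mul {a b c d t δ : ℝ} (hδ : 0 ≤ δ)
    (hcb : t ≤ c * b) (hda : t ≤ d * a) :
    4 * δ * t ≤ a ^ 2 + b ^ 2 + δ ^ 2 * (c ^ 2 + d ^ 2) := by
  nlinarith [sq_nonneg (b - δ * c), sq_nonneg (a - δ * d)]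

theorem norm_add_I_smul_sq {E : Type*} [NormedAddCommGroup E] [InnerProductSpace ℂ E] (a b : E) :
    ‖a + Complex.I • b‖ ^ 2 = ‖a‖ ^ 2 + ‖b‖ ^ 2 - 2 * (⟪a, b⟫).im := by
  rw [norm_add_sq (𝕜 := ℂ), inner_smul_right, norm_smul, Complex.norm_I, one_mul]
  simp only [RCLike.re_to_complex, Complex.mul_re, Complex.I_re, Complex.I_im]
  ring

namespace LinearPMap

variable {H1 H2 : Type*} [NormedAddCommGroup H1] [InnerProductSpace ℂ H1] [CompleteSpace H1]
  [NormedAddCommGroup H2] [InnerProductSpace ℂ H2]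
  {A : H1 →ₗ.[ℂ] H2}

theorem norm_residual_sq_add_norm_residual_sq (hd : Dense (A.domain : Set H1))
    (u : A.domain) (v : A.adjoint.domain) :
    ‖A.adjoint v + Complex.I • (u : H1)‖ ^ 2 + ‖A u - (v : H2)‖ ^ 2
      = (‖(u : H1)‖ ^ 2 + ‖A u‖ ^ 2) + (‖(v : H2)‖ ^ 2 + ‖A.adjoint v‖ ^ 2)
        - 2 * ((⟪(v : H2), A u⟫).re + (⟪(v : H2), A u⟫).im) := by
  rw [norm_add_I_smul_sq, adjoint_isFormalAdjoint hd v u, norm_sub_sq (𝕜 := ℂ),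
    inner_re_symm (𝕜 := ℂ)]
  simp only [RCLike.re_to_complex]
  ring

theorem two_mul_abs_re_add_im_inner_le (hd : Dense (A.domain : Set H1))
    (u : A.domain) (v : A.adjoint.domain) {δ : ℝ} (hδ : 0 < δ) :
    2 * |(⟪(v : H2), A u⟫).re + (⟪(v : H2), A u⟫).im|
      ≤ √2 / (2 * δ) * (‖(u : H1)‖ ^ 2 + ‖A u‖ ^ 2)
        + √2 * δ / 2 * (‖(v : H2)‖ ^ 2 + ‖A.adjoint v‖ ^ 2) := by
  set z := ⟪(v : H2), A u⟫
  have hz : 4 * δ * ‖z‖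
      ≤ ‖(u : H1)‖ ^ 2 + ‖A u‖ ^ 2 + δ ^ 2 * (‖(v : H2)‖ ^ 2 + ‖A.adjoint v‖ ^ 2) := by
    refine four_mul_le_of_le_mul_of_le_mul hδ.le (norm_inner_le_norm _ _) ?_
    simpa only [z, adjoint_isFormalAdjoint hd v u] using
      norm_inner_le_norm (𝕜 := ℂ) (A.adjoint v) (u : H1)
  calc 2 * |z.re + z.im| ≤ 2 * (√2 * ‖z‖) := by gcongr; exact z.abs_re_add_im_le
    _ = √2 / (2 * δ) * (4 * δ * ‖z‖) := by field_simp; ring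
    _ ≤ √2 / (2 * δ) * (‖(u : H1)‖ ^ 2 + ‖A u‖ ^ 2
          + δ ^ 2 * (‖(v : H2)‖ ^ 2 + ‖A.adjoint v‖ ^ 2)) := by gcongr
    _ = _ := by field_simp

end LinearPMap

theorem stmt_12_general
    {H1 H2 : Type*} [NormedAddCommGroup H1] [InnerProductSpace ℂ H1] [CompleteSpace H1]
    [NormedAddCommGroup H2] [InnerProductSpace ℂ H2]
    (A : H1 →ₗ.[ℂ] H2) (hd : Dense (A.domain : Set H1))
    (f : H1) (x xt : A.domain) (y yt : A.adjoint.domain)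
    (h1 : A.adjoint y + Complex.I • (x : H1) = f) (h2 : A x = (y : H2))
    (δ : ℝ) (hδ : 0 < δ) :
    (1 - Real.sqrt 2 / (2 * δ)) * (‖(x : H1) - (xt : H1)‖ ^ 2 + ‖A (x - xt)‖ ^ 2)
      + (1 - Real.sqrt 2 * δ / 2) * (‖(y : H2) - (yt : H2)‖ ^ 2 + ‖A.adjoint (y - yt)‖ ^ 2)
      ≤ ‖f - Complex.I • (xt : H1) - A.adjoint yt‖ ^ 2 + ‖(yt : H2) - A xt‖ ^ 2 ∧
    ‖f - Complex.I • (xt : H1) - A.adjoint yt‖ ^ 2 + ‖(yt : H2) - A xt‖ ^ 2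
      ≤ (1 + Real.sqrt 2 / (2 * δ)) * (‖(x : H1) - (xt : H1)‖ ^ 2 + ‖A (x - xt)‖ ^ 2)
        + (1 + Real.sqrt 2 * δ / 2) * (‖(y : H2) - (yt : H2)‖ ^ 2 + ‖A.adjoint (y - yt)‖ ^ 2) := by
  have hres1 : f - Complex.I • (xt : H1) - A.adjoint yt
      = A.adjoint (y - yt) + Complex.I • ((x - xt : A.domain) : H1) := by
    rw [← h1, A.adjoint.map_sub, Submodule.coe_sub, smul_sub]; abel
  have hres2 : (yt : H2) - A xt = A (x - xt) - ((y - yt : A.adjoint.domain) : H2) := by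
    rw [A.map_sub, h2, Submodule.coe_sub]; abel
  have hM := A.norm_residual_sq_add_norm_residual_sq hd (x - xt) (y - yt)
  have hcross := A.two_mul_abs_re_add_im_inner_le hd (x - xt) (y - yt) hδ
  set w := (⟪((y - yt : A.adjoint.domain) : H2), A (x - xt)⟫).re
    + (⟪((y - yt : A.adjoint.domain) : H2), A (x - xt)⟫).im
  rw [hres1, hres2]
  simp only [Submodule.coe_sub] at hM hcross ⊢
  rw [hM]
  constructor <;> linarith [le_abs_self w, neg_abs_le w]

/-- Parametrized two-sided bounds in the Case II setting. -/
theorem stmt_12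
    {H1 H2 : Type*} [NormedAddCommGroup H1] [InnerProductSpace ℂ H1] [CompleteSpace H1]
    [NormedAddCommGroup H2] [InnerProductSpace ℂ H2] [CompleteSpace H2]
    (A : H1 →ₗ.[ℂ] H2) (hd : Dense (A.domain : Set H1)) (hc : A.IsClosed)
    (f : H1) (x xt : A.domain) (y yt : A.adjoint.domain)
    (h1 : A.adjoint y + Complex.I • (x : H1) = f) (h2 : A x = (y : H2))
    (δ : ℝ) (hδ : 0 < δ) :
    (1 - Real.sqrt 2 / (2 * δ)) * (‖(x : H1) - (xt : H1)‖ ^ 2 + ‖A (x - xt)‖ ^ 2)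
      + (1 - Real.sqrt 2 * δ / 2) * (‖(y : H2) - (yt : H2)‖ ^ 2 + ‖A.adjoint (y - yt)‖ ^ 2)
      ≤ ‖f - Complex.I • (xt : H1) - A.adjoint yt‖ ^ 2 + ‖(yt : H2) - A xt‖ ^ 2 ∧
    ‖f - Complex.I • (xt : H1) - A.adjoint yt‖ ^ 2 + ‖(yt : H2) - A xt‖ ^ 2
      ≤ (1 + Real.sqrt 2 / (2 * δ)) * (‖(x : H1) - (xt : H1)‖ ^ 2 + ‖A (x - xt)‖ ^ 2)
        + (1 + Real.sqrt 2 * δ / 2) * (‖(y : H2) - (yt : H2)‖ ^ 2 + ‖A.adjoint (y - yt)‖ ^ 2) :=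
  stmt_12_general A hd f x xt y yt h1 h2 δ hδ
end

section
/- Regular-approximation error identity: let (x, y) solve A*y + x = f, Ax = y, and suppose x̃ ∈ D(A) with ỹ = A x̃ ∈ D(A*). Then ‖x − x̃‖² + ‖A(x − x̃)‖² + ‖y − ỹ‖² + ‖A*(y − ỹ)‖² = ‖f − x̃ − A*ỹ‖². -/
open scoped ComplexInnerProductSpace

/-- Regular-approximation error identity (Case I). -/
theorem stmt_15
    {H1 H2 : Type*} [NormedAddCommGroup H1] [InnerProductSpace ℂ H1] [CompleteSpace H1]
    [NormedAddCommGroup H2] [InnerProductSpace ℂ H2] [CompleteSpace H2]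
    (A : H1 →ₗ.[ℂ] H2) (hd : Dense (A.domain : Set H1)) (hc : A.IsClosed)
    (f : H1) (x : A.domain) (y : A.adjoint.domain)
    (h1 : A.adjoint y + (x : H1) = f) (h2 : A x = (y : H2))
    (xt : A.domain) (hyt : A xt ∈ A.adjoint.domain) :
    ‖(x : H1) - (xt : H1)‖ ^ 2 + ‖A (x - xt)‖ ^ 2
      + ‖(y : H2) - A xt‖ ^ 2 + ‖A.adjoint (y - ⟨A xt, hyt⟩)‖ ^ 2
      = ‖f - (xt : H1) - A.adjoint ⟨A xt, hyt⟩‖ ^ 2 := by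
  set u : A.domain := x - xt with hu
  set v : A.adjoint.domain := y - ⟨A xt, hyt⟩ with hv
  have hvcoe : (v : H2) = (y : H2) - A xt := rfl
  have hAu : A u = (v : H2) := by
    rw [hu, A.map_sub, h2, hvcoe]
  have hrhs : f - (xt : H1) - A.adjoint ⟨A xt, hyt⟩
      = A.adjoint v + (u : H1) := by
    rw [← h1, hv, A.adjoint.map_sub]
    simp only [hu, AddSubgroupClass.coe_sub]
    abel
  have hucoe : (u : H1) = (x : H1) - (xt : H1) := rfl
  rw [hrhs, ← hucoe, ← hvcoe, ← hAu]
  rw [@norm_add_sq ℂ]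
  have hinner : ⟪A.adjoint v, (u : H1)⟫ = ⟪(v : H2), A u⟫ :=
    LinearPMap.adjoint_isFormalAdjoint hd v u
  rw [hinner, hAu, inner_self_eq_norm_sq]
  push_cast
  ring
end

section
/- Regular-approximation two-sided estimate for Case II: let (x, y) solve A*y + i x = f, Ax = y, and suppose x̃ ∈ D(A) with ỹ = A x̃ ∈ D(A*). Then ‖f − i x̃ − A*ỹ‖² ≤ ‖x − x̃‖² + ‖A(x − x̃)‖² + ‖y − ỹ‖² + ‖A*(y − ỹ)‖² ≤ 2‖f − i x̃ − A*ỹ‖². -/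
open scoped ComplexInnerProductSpace

/-- Regular-approximation two-sided estimate for Case II. -/
theorem stmt_16
    {H1 H2 : Type*} [NormedAddCommGroup H1] [InnerProductSpace ℂ H1] [CompleteSpace H1]
    [NormedAddCommGroup H2] [InnerProductSpace ℂ H2] [CompleteSpace H2]
    (A : H1 →ₗ.[ℂ] H2) (hd : Dense (A.domain : Set H1)) (hc : A.IsClosed)
    (f : H1) (x : A.domain) (y : A.adjoint.domain)
    (h1 : A.adjoint y + Complex.I • (x : H1) = f) (h2 : A x = (y : H2))
    (xt : A.domain) (hyt : A xt ∈ A.adjoint.domain) :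
    ‖f - Complex.I • (xt : H1) - A.adjoint ⟨A xt, hyt⟩‖ ^ 2
      ≤ ‖(x : H1) - (xt : H1)‖ ^ 2 + ‖A (x - xt)‖ ^ 2
        + ‖(y : H2) - A xt‖ ^ 2 + ‖A.adjoint (y - ⟨A xt, hyt⟩)‖ ^ 2 ∧
    ‖(x : H1) - (xt : H1)‖ ^ 2 + ‖A (x - xt)‖ ^ 2
        + ‖(y : H2) - A xt‖ ^ 2 + ‖A.adjoint (y - ⟨A xt, hyt⟩)‖ ^ 2
      ≤ 2 * ‖f - Complex.I • (xt : H1) - A.adjoint ⟨A xt, hyt⟩‖ ^ 2 := by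
  set d : A.adjoint.domain := y - ⟨A xt, hyt⟩ with hd'
  set e : A.domain := x - xt with he'
  have hde : (d : H2) = (y : H2) - A xt := rfl
  have hee : (e : H1) = (x : H1) - (xt : H1) := rfl
  have hAe : A e = (d : H2) := by
    rw [he', A.map_sub, h2, hde]
  -- the residual equals A* d + i e
  have hr : f - Complex.I • (xt : H1) - A.adjoint ⟨A xt, hyt⟩
      = A.adjoint d + Complex.I • (e : H1) := by
    rw [← h1, hd', A.adjoint.map_sub, hee, smul_sub]
    abel
  -- inner product identity
  have hadj : ⟪(A.adjoint d : H1), (e : H1)⟫ = (‖(d : H2)‖ : ℂ) ^ 2 := by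
    have := (A.adjoint_isFormalAdjoint hd) d e
    rw [this, hAe, inner_self_eq_norm_sq_to_K]
    norm_cast
  -- norm of residual
  have hnorm : ‖f - Complex.I • (xt : H1) - A.adjoint ⟨A xt, hyt⟩‖ ^ 2
      = ‖A.adjoint d‖ ^ 2 + ‖(e : H1)‖ ^ 2 := by
    have hcross : RCLike.re ⟪(A.adjoint d : H1), Complex.I • (e : H1)⟫ = 0 := by
      rw [inner_smul_right, hadj]
      have h4 : Complex.I * ((‖(d : H2)‖ : ℂ)) ^ 2
          = Complex.I * ((‖(d : H2)‖ ^ 2 : ℝ) : ℂ) := by push_cast; ring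
      rw [h4]
      simp [Complex.mul_re, ← Complex.ofReal_pow]
    rw [hr, @norm_add_sq ℂ, hcross]
    simp only [norm_smul, Complex.norm_I, one_mul, mul_zero, add_zero]
  -- ‖d‖² ≤ ‖A* d‖ * ‖e‖
  have hkey : ‖(d : H2)‖ ^ 2 ≤ ‖A.adjoint d‖ * ‖(e : H1)‖ := by
    have h3 : (‖(d : H2)‖ : ℂ) ^ 2 = ⟪(A.adjoint d : H1), (e : H1)⟫ := hadj.symm
    calc ‖(d : H2)‖ ^ 2 = Complex.re ((‖(d : H2)‖ : ℂ) ^ 2) := by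
          simp [← Complex.ofReal_pow]
      _ = Complex.re ⟪(A.adjoint d : H1), (e : H1)⟫ := by rw [h3]
      _ ≤ ‖⟪(A.adjoint d : H1), (e : H1)⟫‖ := Complex.re_le_norm _
      _ ≤ ‖A.adjoint d‖ * ‖(e : H1)‖ := norm_inner_le_norm _ _
  have hsq : ‖(d : H2)‖ ^ 2 ≤ (‖A.adjoint d‖ ^ 2 + ‖(e : H1)‖ ^ 2) / 2 := by
    nlinarith [sq_nonneg (‖A.adjoint d‖ - ‖(e : H1)‖)]
  have hrw1 : ‖A (x - xt)‖ = ‖(d : H2)‖ := by rw [← he', hAe]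
  have hrw2 : ‖(y : H2) - A xt‖ = ‖(d : H2)‖ := by rw [← hde]
  have hrw3 : A.adjoint (y - ⟨A xt, hyt⟩) = A.adjoint d := by rw [← hd']
  rw [hnorm, hrw1, hrw2, hrw3, ← hee]
  constructor
  · nlinarith [sq_nonneg ‖(d : H2)‖, sq_nonneg ‖(e:H1)‖]
  · linarith
end
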